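/- Let ρ(ζ,τ) be the crystal-corner density profile with facet edge b_∞(τ) = −2ln(1−e^{-|τ|/2}). Then for fixed τ ≠ 0, as ζ → b_∞(τ)⁻, one has ρ(ζ,τ) ~ (1/π)·√(e^{-b_∞(τ)+|τ|/2}·(b_∞(τ) − ζ)) up to a multiplicative error tending to 1; in particular ρ vanishes like a square root at the facet edge, so the integrated height h(r) = ∫ over a distance r inside the edge of ρ vanishes like r^{3/2} (the Pokrovsky–Talapov law). -/

import Mathlib

/-!
Inside the rounded region `rho = π⁻¹ arccos g` with `g ζ = cosh (τ/2) - e^{-ζ+|τ|/2}/2`.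
Writing `c = e^{-b_∞+|τ|/2}`, the identity `cosh (τ/2) = 1 + c/2` gives
`1 - g ζ = (c/2)(e^{b_∞-ζ} - 1) ~ (c/2)(b_∞ - ζ)`, and `arccos (1 - x) ~ √(2x)` because
`√(2x) = 2 sin (θ/2)` for `θ = arccos (1 - x)`; hence `rho ~ π⁻¹ √(c (b_∞ - ζ))`.
Asymptotic equivalence of nonnegative integrands survives integration over `(b_∞ - r, b_∞)`,
and there `∫ √(b_∞ - ζ) = (2/3) r^{3/2}`.
-/

open Filter Set

noncomputable def bInfMinus (τ : ℝ) : ℝ := -2 * Real.log (1 + Real.exp (-|τ| / 2))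
noncomputable def bInf (τ : ℝ) : ℝ := -2 * Real.log (1 - Real.exp (-|τ| / 2))

/-- The density profile `ρ(ζ,τ)` of the crystal corner. -/
noncomputable def rho (ζ τ : ℝ) : ℝ :=
  if ζ ≤ bInfMinus τ then 1
  else if ζ < bInf τ then
    (1 / Real.pi) * Real.arccos (Real.cosh (τ / 2) - Real.exp (-ζ + |τ| / 2) / 2)
  else 0

open Real Topology Asymptotics MeasureTheory

theorem Real.tendsto_exp_sub_one_div_nhdsGT :
    Tendsto (fun u : ℝ => (exp u - 1) / u) (𝓝[>] 0) (𝓝 1) := by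
  simpa [div_eq_inv_mul] using (hasDerivAt_exp 0).tendsto_slope_zero_right

theorem Real.sqrt_two_mul_eq_two_mul_sin_half_arccos {x : ℝ} (hx₀ : 0 ≤ x) (hx₂ : x ≤ 2) :
    √(2 * x) = 2 * sin (arccos (1 - x) / 2) := by
  rw [sin_half_eq_sqrt (arccos_nonneg _) (by linarith [arccos_le_pi (1 - x), pi_pos]),
    cos_arccos (by linarith) (by linarith), sub_sub_cancel,
    show 2 * x = 2 ^ 2 * (x / 2) by ring, sqrt_mul (by norm_num), sqrt_sq zero_le_two]

theorem Real.tendsto_arccos_one_sub_div_sqrt :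
    Tendsto (fun x : ℝ => arccos (1 - x) / √(2 * x)) (𝓝[>] 0) (𝓝 1) := by
  have hθ : Tendsto (fun x : ℝ => arccos (1 - x) / 2) (𝓝 0) (𝓝 0) := by
    simpa using
      (((continuous_const (y := (1 : ℝ))).sub continuous_id).arccos.div_const 2).tendsto 0
  have hsinc := ((continuous_sinc.tendsto 0).comp hθ).inv₀ (by simp)
  rw [sinc_zero, inv_one] at hsinc
  refine (hsinc.mono_left nhdsWithin_le_nhds).congr' ?_
  filter_upwards [Ioo_mem_nhdsGT (show (0 : ℝ) < 2 by norm_num)] with x ⟨hx₀, hx₂⟩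
  have hθ₀ : arccos (1 - x) / 2 ≠ 0 := (div_pos (arccos_pos.2 (by linarith)) two_pos).ne'
  rw [Function.comp_apply, sinc_of_ne_zero hθ₀,
    sqrt_two_mul_eq_two_mul_sin_half_arccos hx₀.le hx₂.le, inv_div]
  ring

theorem Filter.Eventually.forall_Ioo_sub_of_nhdsLT {p : ℝ → Prop} {b : ℝ}
    (h : ∀ᶠ x in 𝓝[<] b, p x) : ∀ᶠ r in 𝓝[>] 0, ∀ x ∈ Ioo (b - r) b, p x := by
  obtain ⟨a, hab, hsub⟩ := mem_nhdsLT_iff_exists_Ioo_subset.1 h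
  filter_upwards [Ioo_mem_nhdsGT (sub_pos.2 hab)] with r hr x hx
  exact hsub ⟨by linarith [hr.2, hx.1], hx.2⟩

theorem Asymptotics.IsEquivalent.setIntegral_Ioo_sub {f g : ℝ → ℝ} {b : ℝ}
    (hfg : f ~[𝓝[<] b] g) (hg : ∀ᶠ x in 𝓝[<] b, 0 ≤ g x)
    (hf_int : IntegrableAtFilter f (𝓝[<] b)) (hg_int : IntegrableAtFilter g (𝓝[<] b)) :
    (fun r => ∫ x in Ioo (b - r) b, f x) ~[𝓝[>] 0] fun r => ∫ x in Ioo (b - r) b, g x := by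
  refine IsLittleO.of_bound fun ε hε => ?_
  obtain ⟨s, hs, hfs⟩ := hf_int
  obtain ⟨t, ht, hgt⟩ := hg_int
  filter_upwards
    [((hfg.isLittleO.bound hε).and (hg.and (inter_mem hs ht))).forall_Ioo_sub_of_nhdsLT] with r hr
  have hsub : Ioo (b - r) b ⊆ s ∩ t := fun x hx => (hr x hx).2.2
  have hgr : IntegrableOn g (Ioo (b - r) b) := hgt.mono_set (hsub.trans inter_subset_right)
  have hfr : IntegrableOn f (Ioo (b - r) b) := hfs.mono_set (hsub.trans inter_subset_left)
  have hg_nonneg : 0 ≤ ∫ x in Ioo (b - r) b, g x :=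
    setIntegral_nonneg measurableSet_Ioo fun x hx => (hr x hx).2.1
  calc ‖(∫ x in Ioo (b - r) b, f x) - ∫ x in Ioo (b - r) b, g x‖
      = ‖∫ x in Ioo (b - r) b, (f - g) x‖ := by rw [← integral_sub hfr hgr]; rfl
    _ ≤ ∫ x in Ioo (b - r) b, ε * g x := by
        refine norm_integral_le_of_norm_le (hgr.const_mul ε)
          (ae_restrict_of_forall_mem measurableSet_Ioo fun x hx => ?_)
        simpa [abs_of_nonneg (hr x hx).2.1] using (hr x hx).1
    _ = ε * ‖∫ x in Ioo (b - r) b, g x‖ := by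
        rw [integral_const_mul, Real.norm_of_nonneg hg_nonneg]

theorem integral_Ioo_sqrt_sub (b : ℝ) {r : ℝ} (hr : 0 ≤ r) :
    ∫ x in Ioo (b - r) b, √(b - x) = 2 / 3 * r ^ ((3 : ℝ) / 2) := by
  rw [← integral_Ioc_eq_integral_Ioo, ← intervalIntegral.integral_of_le (by linarith),
    intervalIntegral.integral_comp_sub_left (fun x => √x) b, sub_self, sub_sub_cancel]
  simp only [sqrt_eq_rpow]
  rw [integral_rpow (Or.inl (by norm_num)), zero_rpow (by norm_num)]
  norm_num
  ring

section CrystalCorner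

variable {τ : ℝ}

theorem exp_neg_abs_half_lt_one (hτ : τ ≠ 0) : exp (-|τ| / 2) < 1 :=
  Real.exp_lt_one_iff.2 (by linarith [abs_pos.2 hτ])

theorem exp_neg_bInf (hτ : τ ≠ 0) : exp (-bInf τ) = (1 - exp (-|τ| / 2)) ^ 2 := by
  rw [bInf, show -(-2 * log (1 - exp (-|τ| / 2))) =
    log (1 - exp (-|τ| / 2)) + log (1 - exp (-|τ| / 2)) by ring, exp_add,
    exp_log (by linarith [exp_neg_abs_half_lt_one hτ]), sq]

theorem bInfMinus_lt_bInf (hτ : τ ≠ 0) : bInfMinus τ < bInf τ := by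
  have hs := exp_pos (-|τ| / 2)
  have := log_lt_log (by linarith [exp_neg_abs_half_lt_one hτ]) (by linarith :
    1 - exp (-|τ| / 2) < 1 + exp (-|τ| / 2))
  rw [bInfMinus, bInf]
  linarith

/-- The facet edge is where the argument of `arccos` in `rho` reaches `1`. -/
theorem cosh_half_eq_one_add (hτ : τ ≠ 0) :
    cosh (τ / 2) = 1 + exp (-bInf τ + |τ| / 2) / 2 := by
  have hs := exp_pos (-|τ| / 2)
  have hinv : exp (|τ| / 2) = (exp (-|τ| / 2))⁻¹ := by rw [← exp_neg]; ring_nf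
  rw [← cosh_abs, abs_div, abs_two, cosh_eq, exp_add, exp_neg_bInf hτ, hinv,
    show -(|τ| / 2) = -|τ| / 2 by ring]
  field_simp
  ring

theorem rho_of_mem_Ioo (hτ : τ ≠ 0) {ζ : ℝ} (hζ : ζ ∈ Ioo (bInfMinus τ) (bInf τ)) :
    rho ζ τ = 1 / π *
      arccos (1 - exp (-bInf τ + |τ| / 2) / 2 * (exp (bInf τ - ζ) - 1)) := by
  have hexp : exp (-bInf τ + |τ| / 2) * exp (bInf τ - ζ) = exp (-ζ + |τ| / 2) := by
    rw [← exp_add]; ring_nf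
  rw [rho, if_neg (not_le.2 hζ.1), if_pos hζ.2, cosh_half_eq_one_add hτ]
  congr 2
  linear_combination (1 / 2 : ℝ) * hexp

theorem measurable_rho (τ : ℝ) : Measurable fun ζ => rho ζ τ := by
  refine Measurable.ite measurableSet_Iic measurable_const (Measurable.ite measurableSet_Iio ?_
    measurable_const)
  exact (continuous_const.mul (by fun_prop : Continuous fun ζ : ℝ =>
    cosh (τ / 2) - exp (-ζ + |τ| / 2) / 2).arccos).measurable

theorem rho_mem_Icc (ζ τ : ℝ) : rho ζ τ ∈ Icc 0 1 := by
  have hπ := pi_pos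
  rw [rho]
  split_ifs
  · simp
  · rw [one_div_mul_eq_div]
    exact ⟨div_nonneg (arccos_nonneg _) hπ.le, (div_le_one hπ).2 (arccos_le_pi _)⟩
  · simp

theorem locallyIntegrable_rho (τ : ℝ) : LocallyIntegrable fun ζ => rho ζ τ :=
  fun x => ⟨Ioo (x - 1) (x + 1), Ioo_mem_nhds (by linarith) (by linarith),
    Measure.integrableOn_of_bounded (by simp) (measurable_rho τ).aestronglyMeasurable
      (M := 1) (ae_of_all _ fun ζ => by
        rw [Real.norm_of_nonneg (rho_mem_Icc ζ τ).1]; exact (rho_mem_Icc ζ τ).2)⟩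

end CrystalCorner

noncomputable def edgeProfile (τ ζ : ℝ) : ℝ :=
  1 / π * √(exp (-bInf τ + |τ| / 2) * (bInf τ - ζ))

theorem continuous_edgeProfile (τ : ℝ) : Continuous (edgeProfile τ) := by
  unfold edgeProfile; fun_prop

theorem integral_edgeProfile (τ : ℝ) {r : ℝ} (hr : 0 ≤ r) :
    ∫ ζ in Ioo (bInf τ - r) (bInf τ), edgeProfile τ ζ =
      2 / (3 * π) * √(exp (-bInf τ + |τ| / 2)) * r ^ ((3 : ℝ) / 2) := by
  simp only [edgeProfile, sqrt_mul (exp_pos _).le]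
  rw [integral_const_mul, integral_const_mul, integral_Ioo_sqrt_sub _ hr]
  ring

theorem tendsto_rho_div_edgeProfile {τ : ℝ} (hτ : τ ≠ 0) :
    Tendsto (fun ζ => rho ζ τ / edgeProfile τ ζ) (𝓝[<] bInf τ) (𝓝 1) := by
  set b := bInf τ with hb
  set c := exp (-b + |τ| / 2) with hc_def
  have hc : 0 < c := exp_pos _
  have hu : Tendsto (fun ζ => b - ζ) (𝓝[<] b) (𝓝[>] 0) := by
    refine tendsto_nhdsWithin_of_tendsto_nhds_of_eventually_within _ ?_
      (eventually_nhdsWithin_of_forall fun ζ hζ => mem_Ioi.2 (sub_pos.2 hζ))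
    simpa using ((continuous_sub_left b).tendsto b).mono_left nhdsWithin_le_nhds
  have hx : Tendsto (fun u => c / 2 * (exp u - 1)) (𝓝[>] 0) (𝓝[>] 0) := by
    refine tendsto_nhdsWithin_of_tendsto_nhds_of_eventually_within _ ?_
      (eventually_nhdsWithin_of_forall fun u hu => ?_)
    · simpa using ((by fun_prop : Continuous fun u => c / 2 * (exp u - 1)).tendsto 0).mono_left
        nhdsWithin_le_nhds
    · have hu : 0 < u := hu
      exact mul_pos (half_pos hc) (by linarith [add_one_lt_exp hu.ne'])
  have hlim := ((tendsto_arccos_one_sub_div_sqrt.comp hx).mul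
    (tendsto_exp_sub_one_div_nhdsGT.sqrt)).comp hu
  rw [sqrt_one, mul_one] at hlim
  refine hlim.congr' ?_
  filter_upwards [Ioo_mem_nhdsLT (bInfMinus_lt_bInf hτ)] with ζ hζ
  have hζb : 0 < b - ζ := sub_pos.2 hζ.2
  have hE : 0 < exp (b - ζ) - 1 := by linarith [add_one_lt_exp hζb.ne']
  have h2x : √(2 * (c / 2 * (exp (b - ζ) - 1))) = √c * √(exp (b - ζ) - 1) := by
    rw [← sqrt_mul hc.le]; ring_nf
  simp only [Function.comp_apply, edgeProfile, rho_of_mem_Ioo hτ hζ, ← hb, ← hc_def]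
  rw [h2x, sqrt_div hE.le, sqrt_mul hc.le]
  have := sqrt_pos.2 hc
  have := sqrt_pos.2 hζb
  have := sqrt_pos.2 hE
  field_simp

/-- Pokrovsky–Talapov law: for fixed `τ ≠ 0`, as `ζ → b_∞(τ)⁻`,
`ρ(ζ,τ) ~ (1/π) √(e^{-b_∞(τ)+|τ|/2} (b_∞(τ) - ζ))`, i.e. the density vanishes like a
square root at the facet edge; in particular the integrated height
`h(r) = ∫_{b_∞(τ)-r}^{b_∞(τ)} ρ` vanishes like `r^{3/2}`. -/
theorem rho_edge_asymptotics (τ : ℝ) (hτ : τ ≠ 0) :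
    Tendsto
      (fun ζ => rho ζ τ /
        ((1 / Real.pi) * Real.sqrt (Real.exp (-bInf τ + |τ| / 2) * (bInf τ - ζ))))
      (nhdsWithin (bInf τ) (Set.Iio (bInf τ))) (nhds 1) ∧
    Tendsto
      (fun r : ℝ => (∫ ζ in Set.Ioo (bInf τ - r) (bInf τ), rho ζ τ) / r ^ ((3 : ℝ) / 2))
      (nhdsWithin 0 (Set.Ioi (0 : ℝ)))
      (nhds ((2 / (3 * Real.pi)) * Real.sqrt (Real.exp (-bInf τ + |τ| / 2)))) := by
  have hratio := tendsto_rho_div_edgeProfile hτ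
  refine ⟨hratio, ?_⟩
  have hintegrals := (isEquivalent_of_tendsto_one hratio).setIntegral_Ioo_sub
    (eventually_nhdsWithin_of_forall fun ζ _ => by simp only [edgeProfile]; positivity)
    ((locallyIntegrable_rho τ _).filter_mono nhdsWithin_le_nhds)
    (((continuous_edgeProfile τ).locallyIntegrable _).filter_mono nhdsWithin_le_nhds)
  have hheights := hintegrals.div (IsEquivalent.refl (u := fun r : ℝ => r ^ ((3 : ℝ) / 2)))
  refine hheights.symm.tendsto_nhds (tendsto_const_nhds.congr' ?_)
  filter_upwards [self_mem_nhdsWithin] with r (hr : 0 < r)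
  rw [Pi.div_apply, integral_edgeProfile τ hr.le]
  field_simp
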